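/- Let (Γ_n)_{n≥1} be a sequence of i.i.d. real random variables which are integrable with E Γ₁ = 0, essentially bounded above, and not almost surely equal to 0, and let C > 0. Define the random walk with drift term w_{n+1} = w_n + Γ_{n+1} − C·e^{w_n}. Then there exists A₀ < 0 such that for every deterministic initial condition w₀ < A₀, one has P(∃ n ∈ ℕ : w_n ≥ A₀) = 1. (The escape claim proved via the supermartingale log(−w_{n∧τ}) in the proof of Lemma 2.4.) -/

import Mathlib

open MeasureTheory ProbabilityTheory Filter Topology
open scoped ENNReal

noncomputable section

/-- The cubic stochastic operator `V_θ`, regarded as a map on (Euclidean) `ℝ³`. -/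
def Vcso (θ : ℝ) (x : EuclideanSpace ℝ (Fin 3)) : EuclideanSpace ℝ (Fin 3) :=
  WithLp.toLp 2 ![x 0 * ((x 0)^2 + 3*θ*(x 0)*(x 1 + x 2) + 3*(1-θ)*((x 1)^2 + (x 2)^2) + 2*(x 1)*(x 2)),
    x 1 * ((x 1)^2 + 3*θ*(x 1)*(x 2 + x 0) + 3*(1-θ)*((x 2)^2 + (x 0)^2) + 2*(x 2)*(x 0)),
    x 2 * ((x 2)^2 + 3*θ*(x 2)*(x 0 + x 1) + 3*(1-θ)*((x 0)^2 + (x 1)^2) + 2*(x 0)*(x 1))]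

/-- The simplex `Δ² = {x ∈ ℝ³ : x₁,x₂,x₃ ≥ 0, x₁+x₂+x₃ = 1}`. -/
def simplex2 : Set (EuclideanSpace ℝ (Fin 3)) :=
  {x | 0 ≤ x 0 ∧ 0 ≤ x 1 ∧ 0 ≤ x 2 ∧ x 0 + x 1 + x 2 = 1}

/-- The random orbit `φ_n(x) = V_{θ_n} ∘ ⋯ ∘ V_{θ_1}(x)` driven by the sequence
`θ_1, θ_2, … = θs 0, θs 1, …`. -/
def phiRDS (θs : ℕ → ℝ) : ℕ → EuclideanSpace ℝ (Fin 3) → EuclideanSpace ℝ (Fin 3)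
  | 0, x => x
  | n+1, x => Vcso (θs n) (phiRDS θs n x)

/-- The vertex `e₁ = (1,0,0)`. -/
def e1 : EuclideanSpace ℝ (Fin 3) := WithLp.toLp 2 ![1, 0, 0]

/-- The vertex `c = (1/2,1/2,0)`. -/
def cpt : EuclideanSpace ℝ (Fin 3) := WithLp.toLp 2 ![1/2, 1/2, 0]

/-- The vertex `C = (1/3,1/3,1/3)`. -/
def Cpt : EuclideanSpace ℝ (Fin 3) := WithLp.toLp 2 ![1/3, 1/3, 1/3]

/-- `G₁ = {y ∈ Δ² : y₁ ≥ y₂ ≥ y₃}`. -/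
def G1 : Set (EuclideanSpace ℝ (Fin 3)) :=
  {y ∈ simplex2 | y 0 ≥ y 1 ∧ y 1 ≥ y 2}

/-- The interior of `G₁`: `{y ∈ Δ² : y₁ > y₂ > y₃ > 0}`. -/
def intG1 : Set (EuclideanSpace ℝ (Fin 3)) :=
  {y ∈ simplex2 | y 0 > y 1 ∧ y 1 > y 2 ∧ y 2 > 0}

/-- The edge `M₁₂ = {y ∈ Δ² : y₁ = y₂ ≥ y₃}`. -/
def M12 : Set (EuclideanSpace ℝ (Fin 3)) :=
  {y ∈ simplex2 | y 0 = y 1 ∧ y 1 ≥ y 2}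

/-- The edge `M₂₃ = {y ∈ Δ² : y₁ ≥ y₂ = y₃}`. -/
def M23 : Set (EuclideanSpace ℝ (Fin 3)) :=
  {y ∈ simplex2 | y 0 ≥ y 1 ∧ y 1 = y 2}

/-- The edge `Γ₁₂ = {y ∈ Δ² : y₁ ≥ y₂, y₃ = 0}`. -/
def Gamma12 : Set (EuclideanSpace ℝ (Fin 3)) :=
  {y ∈ simplex2 | y 0 ≥ y 1 ∧ y 2 = 0}

/-- The seven fixed points `𝒜`. -/
def fixedA : Set (EuclideanSpace ℝ (Fin 3)) :=
  {(WithLp.toLp 2 ![1,0,0] : EuclideanSpace ℝ (Fin 3)), (WithLp.toLp 2 ![0,1,0] : EuclideanSpace ℝ (Fin 3)), (WithLp.toLp 2 ![0,0,1] : EuclideanSpace ℝ (Fin 3)), (WithLp.toLp 2 ![1/2,1/2,0] : EuclideanSpace ℝ (Fin 3)), (WithLp.toLp 2 ![1/2,0,1/2] : EuclideanSpace ℝ (Fin 3)), (WithLp.toLp 2 ![0,1/2,1/2] : EuclideanSpace ℝ (Fin 3)), (WithLp.toLp 2 ![1/3,1/3,1/3] : EuclideanSpace ℝ (Fin 3)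)}

/-- Positive part of `log t`, valued in `ℝ≥0∞`. -/
def logPos (t : ℝ) : ℝ≥0∞ := ENNReal.ofReal (Real.log t)

/-- Negative part of the extended logarithm (with `log 0 = -∞`), valued in `ℝ≥0∞`. -/
def logNeg (t : ℝ) : ℝ≥0∞ := if t ≤ 0 then ⊤ else ENNReal.ofReal (-Real.log t)

/-- `E log g(Θ) < 0` in the extended sense (the value `-∞` is allowed), where `Θ` has law `μ`:
the positive part of the extended expectation is strictly smaller than the negative part. -/
def expLogNeg (μ : Measure ℝ) (g : ℝ → ℝ) : Prop :=
  ∫⁻ θ, logPos (g θ) ∂μ < ∫⁻ θ, logNeg (g θ) ∂μ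

/-- `E log g(Θ) ≤ r` in the extended sense (the value `-∞` is allowed), where `Θ` has law `μ`. -/
def expLogLe (μ : Measure ℝ) (g : ℝ → ℝ) (r : ℝ) : Prop :=
  ∫⁻ θ, logPos (g θ) ∂μ + ENNReal.ofReal (-r) ≤ ∫⁻ θ, logNeg (g θ) ∂μ + ENNReal.ofReal r

/-- The topological support of a measure on `ℝ`: points all of whose open neighborhoods
have positive measure. -/
def measSupport (μ : Measure ℝ) : Set ℝ :=
  {t : ℝ | ∀ U : Set ℝ, IsOpen U → t ∈ U → 0 < μ U}

/-! Write `a = -w`. While the walk stays below `A₀`, `log a` is a supermartingale: in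
`log (a - Γ + C e^{-a}) - log a` the first-order term `-Γ / a` has mean zero, the second-order
term `-(Γ⁺)² / (2 a²)` has mean `-κ / (2 a²) < 0`, and for `a` large it beats the drift
`C e^{-a} / a`. Stopped on reaching `[A₀, ∞)`, the walk thus gives a nonnegative supermartingale,
which converges a.s. On the event that the walk never reaches `A₀`, `w_n` then converges, so
`Γ_{n+1} = w_{n+1} - w_n + C e^{w_n}` tends to a positive limit; but by the second Borel–Cantelli
lemma `Γ_{n+1} < 0` infinitely often. -/

namespace Real

lemma log_one_sub_le {s : ℝ} (hs₀ : 0 ≤ s) (hs₁ : s < 1) : log (1 - s) ≤ -s - s ^ 2 / 2 := by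
  have h := sum_le_hasSum (Finset.range 2) (fun n _ => by positivity)
    (hasSum_pow_div_log_of_abs_lt_one (abs_lt.2 ⟨by linarith, hs₁⟩))
  norm_num [Finset.sum_range_succ] at h
  linarith

lemma log_sub_le {a x : ℝ} (ha : 0 < a) (hx : x < a) :
    log (a - x) ≤ log a - x / a - max x 0 ^ 2 / (2 * a ^ 2) := by
  rcases le_or_gt 0 x with hx₀ | hx₀
  · have hsplit : a - x = a * (1 - x / a) := by field_simp
    rw [hsplit, log_mul ha.ne' (by linarith [(div_lt_one ha).2 hx]), max_eq_left hx₀]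
    have := log_one_sub_le (div_nonneg hx₀ ha.le) ((div_lt_one ha).2 hx)
    have hsq : (x / a) ^ 2 / 2 = x ^ 2 / (2 * a ^ 2) := by field_simp
    linarith
  · have := log_le_sub_one_of_pos (div_pos (by linarith : 0 < a - x) ha)
    rw [log_div (by linarith) ha.ne', sub_div, div_self ha.ne'] at this
    have hmax : max x 0 ^ 2 / (2 * a ^ 2) = 0 := by simp [max_eq_right hx₀.le]
    linarith

lemma log_add_le {b u : ℝ} (hb : 0 < b) (hbu : 0 < b + u) : log (b + u) ≤ log b + u / b := by
  have := log_le_sub_one_of_pos (div_pos hbu hb)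
  rw [log_div hbu.ne' hb.ne', add_div, div_self hb.ne'] at this
  linarith

end Real

open Real

lemma log_neg_add_sub_mul_exp_le {x G M C κ : ℝ} (hx : x < 0) (hG : G ≤ M) (hM : 2 * M ≤ -x)
    (hC : 0 ≤ C) (hκ : 4 * C * (-x) * exp x ≤ κ) :
    log (-(x + G - C * exp x)) ≤ log (-x) + x⁻¹ * G + -(2 * x ^ 2)⁻¹ * (max G 0 ^ 2 - κ) := by
  obtain ⟨a, rfl⟩ : ∃ a, x = -a := ⟨-x, by ring⟩
  have ha : 0 < a := by linarith
  have haG : a / 2 ≤ a - G := by linarith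
  have hu : 0 ≤ C * exp (-a) := by positivity
  calc log (-(-a + G - C * exp (-a))) = log ((a - G) + C * exp (-a)) := by ring_nf
    _ ≤ log (a - G) + C * exp (-a) / (a - G) := log_add_le (by linarith) (by linarith)
    _ ≤ log a - G / a - max G 0 ^ 2 / (2 * a ^ 2) + κ / (2 * a ^ 2) := by
      gcongr ?_ + ?_
      · exact log_sub_le ha (by linarith)
      · calc C * exp (-a) / (a - G) ≤ C * exp (-a) / (a / 2) := by gcongr
          _ ≤ κ / (2 * a ^ 2) := by
            rw [div_le_div_iff₀ (by positivity) (by positivity)]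
            nlinarith
    _ = _ := by field_simp; ring

lemma eventually_pos_of_tendsto_of_eq_add_sub_mul_exp {w γ : ℕ → ℝ} {C L : ℝ} (hC : 0 < C)
    (hrec : ∀ n, w (n + 1) = w n + γ (n + 1) - C * exp (w n)) (hw : Tendsto w atTop (𝓝 L)) :
    ∀ᶠ n in atTop, 0 < γ (n + 1) := by
  have hlim := ((hw.comp (tendsto_add_atTop_nat 1)).sub hw).add
    (((continuous_exp.tendsto L).comp hw).const_mul C)
  rw [sub_self, zero_add] at hlim
  have hγ : Tendsto (fun n => γ (n + 1)) atTop (𝓝 (C * exp L)) :=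
    hlim.congr fun n => by simp only [Function.comp_apply, hrec]; ring
  exact hγ.eventually (eventually_gt_nhds (by positivity))

lemma exists_neg_forall_mul_exp_neg_le {κ : ℝ} (C B : ℝ) (hκ : 0 < κ) :
    ∃ A < 0, B ≤ -A ∧ ∀ a ≥ -A, 4 * C * a * exp (-a) ≤ κ := by
  have hlim : Tendsto (fun a => 4 * C * (a ^ 1 * exp (-a))) atTop (𝓝 (4 * C * 0)) :=
    (tendsto_pow_mul_exp_neg_atTop_nhds_zero 1).const_mul _
  rw [mul_zero] at hlim
  obtain ⟨N, hN⟩ := eventually_atTop.1 (hlim.eventually (ge_mem_nhds hκ))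
  refine ⟨-max N (max B 1), by simp, by simp, fun a ha => ?_⟩
  simpa [mul_assoc] using hN a (le_trans (by simp) ha)

section Probability

variable {Ω : Type*} [MeasurableSpace Ω] {μ : Measure Ω}

lemma measure_setOf_pos_ne_zero_of_integral_eq_zero {X : Ω → ℝ} (hint : Integrable X μ)
    (hmean : ∫ ω, X ω ∂μ = 0) (hX : ¬ ∀ᵐ ω ∂μ, X ω = 0) : μ {ω | 0 < X ω} ≠ 0 := by
  intro h0
  apply hX
  have hle : ∀ᵐ ω ∂μ, X ω ≤ 0 := by
    rw [ae_iff]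
    simpa only [not_le] using h0
  have hneg := (integral_eq_zero_iff_of_nonneg_ae (hle.mono fun _ => neg_nonneg.2) hint.neg).1
    (by rw [integral_neg, hmean, neg_zero])
  filter_upwards [hneg] with ω h
  simpa using h

lemma integral_sq_posPart_pos_of_integral_eq_zero {X : Ω → ℝ} (hint : Integrable X μ)
    (hsq : Integrable (fun ω => max (X ω) 0 ^ 2) μ) (hmean : ∫ ω, X ω ∂μ = 0)
    (hX : ¬ ∀ᵐ ω ∂μ, X ω = 0) : 0 < ∫ ω, max (X ω) 0 ^ 2 ∂μ := by
  rw [integral_pos_iff_support_of_nonneg_ae (ae_of_all _ fun _ => sq_nonneg _) hsq]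
  have hsupp : Function.support (fun ω => max (X ω) 0 ^ 2) = {ω | 0 < X ω} := by
    ext ω
    simp
  rw [hsupp]
  exact pos_iff_ne_zero.2 (measure_setOf_pos_ne_zero_of_integral_eq_zero hint hmean hX)

lemma ae_frequently_mem_of_iIndepFun_of_identDistrib {β : Type*} [MeasurableSpace β]
    {ξ : ℕ → Ω → β} (hmeas : ∀ n, Measurable (ξ n)) (hind : iIndepFun ξ μ)
    (hident : ∀ n, IdentDistrib (ξ n) (ξ 0) μ μ) {S : Set β} (hS : MeasurableSet S)
    (hpos : μ (ξ 0 ⁻¹' S) ≠ 0) : ∀ᵐ ω ∂μ, ∃ᶠ n in atTop, ξ n ω ∈ S := by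
  have hsm : ∀ n, MeasurableSet (ξ n ⁻¹' S) := fun n => hmeas n hS
  have hiis : iIndepSet (fun n => ξ n ⁻¹' S) μ := by
    rw [iIndepSet_iff_iIndepSets_singleton hsm, iIndepSets_singleton_iff]
    exact fun t => hind.measure_inter_preimage_eq_mul (sets := fun _ => S) t fun _ _ => hS
  have hsum : ∑' n, μ (ξ n ⁻¹' S) = ∞ := by
    simp_rw [fun n => (hident n).measure_mem_eq hS]
    exact ENNReal.tsum_const_eq_top_of_ne_zero hpos
  have := hind.isProbabilityMeasure
  have hae : ∀ᵐ ω ∂μ, ω ∈ limsup (fun n => ξ n ⁻¹' S) atTop :=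
    (prob_compl_eq_zero_iff (MeasurableSet.measurableSet_limsup hsm)).2
      (measure_limsup_eq_one hsm hiis hsum)
  filter_upwards [hae] with ω hω
  exact mem_limsup_iff_frequently_mem.1 hω

end Probability

section Martingale

variable {Ω : Type*} {m0 : MeasurableSpace Ω} {μ : Measure Ω}

lemma setIntegral_mul_eq_zero_of_indep {m : MeasurableSpace Ω} (hm : m ≤ m0) {s : Set Ω}
    (hs : MeasurableSet[m] s) {H X : Ω → ℝ} (hH : Measurable[m] H)
    (hX : AEStronglyMeasurable[m0] X μ) (hind : Indep (MeasurableSpace.comap X inferInstance) m μ)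
    (hmean : ∫ ω, X ω ∂μ = 0) : ∫ ω in s, H ω * X ω ∂μ = 0 := by
  have hHs : Measurable[m] (s.indicator H) := hH.indicator hs
  have hindep : IndepFun (s.indicator H) X μ :=
    indep_of_indep_of_le_left hind.symm hHs.comap_le
  rw [← integral_indicator (hm s hs)]
  simp_rw [Set.indicator_mul_left]
  rw [hindep.integral_fun_mul_eq_mul_integral (hHs.mono hm le_rfl).aestronglyMeasurable hX,
    hmean, mul_zero]

lemma setIntegral_le_of_ae_le_add_mul_indep {m : MeasurableSpace Ω} (hm : m ≤ m0) {s : Set Ω}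
    (hs : MeasurableSet[m] s) {Y Z H X : Ω → ℝ} {c : ℝ} (hY : Integrable Y μ)
    (hZ : Integrable Z μ) (hH : Measurable[m] H) (hHc : ∀ ω, ‖H ω‖ ≤ c) (hX : Integrable X μ)
    (hind : Indep (MeasurableSpace.comap X inferInstance) m μ) (hmean : ∫ ω, X ω ∂μ = 0)
    (hle : ∀ᵐ ω ∂μ, Z ω ≤ Y ω + H ω * X ω) : ∫ ω in s, Z ω ∂μ ≤ ∫ ω in s, Y ω ∂μ := by
  have hHX : Integrable (fun ω => H ω * X ω) μ :=
    hX.bdd_mul (hH.mono hm le_rfl).aestronglyMeasurable (ae_of_all _ hHc)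
  calc ∫ ω in s, Z ω ∂μ ≤ ∫ ω in s, (Y ω + H ω * X ω) ∂μ :=
        setIntegral_mono_ae hZ.integrableOn (hY.add hHX).integrableOn hle
    _ = ∫ ω in s, Y ω ∂μ := by
      rw [integral_add hY.integrableOn hHX.integrableOn,
        setIntegral_mul_eq_zero_of_indep hm hs hH hX.aestronglyMeasurable hind hmean, add_zero]

theorem MeasureTheory.Supermartingale.ae_exists_tendsto_of_nonneg [IsFiniteMeasure μ]
    {ℱ : Filtration ℕ m0} {f : ℕ → Ω → ℝ} (hf : Supermartingale f ℱ μ)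
    (hnonneg : ∀ n, 0 ≤ᵐ[μ] f n) :
    ∀ᵐ ω ∂μ, ∃ c, Tendsto (fun n => f n ω) atTop (𝓝 c) := by
  have hbdd : ∀ n, eLpNorm ((-f) n) 1 μ ≤ ENNReal.ofReal (∫ ω, f 0 ω ∂μ) := by
    intro n
    rw [Pi.neg_apply, eLpNorm_neg, eLpNorm_one_eq_lintegral_enorm,
      ← ofReal_integral_norm_eq_lintegral_enorm (hf.integrable n)]
    refine ENNReal.ofReal_le_ofReal ?_
    calc ∫ ω, ‖f n ω‖ ∂μ = ∫ ω, f n ω ∂μ :=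
          integral_congr_ae ((hnonneg n).mono fun ω hω => Real.norm_of_nonneg hω)
      _ ≤ ∫ ω, f 0 ω ∂μ := by
          simpa using hf.setIntegral_le n.zero_le MeasurableSet.univ
  filter_upwards [hf.neg.exists_ae_tendsto_of_bdd hbdd] with ω ⟨c, hc⟩
  exact ⟨-c, by simpa using hc.neg⟩

end Martingale

section StoppedWalk

variable {Ω : Type*} {m0 : MeasurableSpace Ω} {Γ : ℕ → Ω → ℝ} {C A M κ w₀ : ℝ} {P : Measure Ω}

variable (Γ C A w₀) in
/-- `w_{n ∧ τ}`, where `τ` is the first time the walk `w` of the theorem reaches `[A, ∞)`. -/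
def stoppedWalk : ℕ → Ω → ℝ
  | 0 => fun _ => w₀
  | n + 1 => fun ω =>
    if stoppedWalk n ω < A then stoppedWalk n ω + Γ (n + 1) ω - C * exp (stoppedWalk n ω)
    else stoppedWalk n ω

lemma stoppedWalk_succ_of_lt {n : ℕ} {ω : Ω} (h : stoppedWalk Γ C A w₀ n ω < A) :
    stoppedWalk Γ C A w₀ (n + 1) ω =
      stoppedWalk Γ C A w₀ n ω + Γ (n + 1) ω - C * exp (stoppedWalk Γ C A w₀ n ω) :=
  if_pos h

lemma stoppedWalk_succ_of_le {n : ℕ} {ω : Ω} (h : A ≤ stoppedWalk Γ C A w₀ n ω) :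
    stoppedWalk Γ C A w₀ (n + 1) ω = stoppedWalk Γ C A w₀ n ω :=
  if_neg h.not_gt

lemma stoppedWalk_eq_of_forall_lt {w : ℕ → Ω → ℝ} {ω : Ω} (hw0 : w 0 ω = w₀)
    (hrec : ∀ n, w (n + 1) ω = w n ω + Γ (n + 1) ω - C * exp (w n ω)) (hlt : ∀ n, w n ω < A) :
    ∀ n, stoppedWalk Γ C A w₀ n ω = w n ω
  | 0 => hw0.symm
  | n + 1 => by
    have ih := stoppedWalk_eq_of_forall_lt hw0 hrec hlt n
    rw [stoppedWalk_succ_of_lt (ih ▸ hlt n), ih, hrec]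

lemma stoppedWalk_le_add {ω : Ω} (hw₀ : w₀ < A) (hC : 0 ≤ C) (hM : 0 ≤ M)
    (hΓ : ∀ n, Γ (n + 1) ω ≤ M) : ∀ n, stoppedWalk Γ C A w₀ n ω ≤ A + M
  | 0 => by simp only [stoppedWalk]; linarith
  | n + 1 => by
    have ih := stoppedWalk_le_add hw₀ hC hM hΓ n
    rcases lt_or_ge (stoppedWalk Γ C A w₀ n ω) A with h | h
    · rw [stoppedWalk_succ_of_lt h]
      nlinarith [hΓ n, exp_pos (stoppedWalk Γ C A w₀ n ω)]
    · rwa [stoppedWalk_succ_of_le h]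

lemma measurable_stoppedWalk {m : MeasurableSpace Ω} :
    ∀ {n : ℕ}, (∀ k < n, Measurable[m] (Γ (k + 1))) → Measurable[m] (stoppedWalk Γ C A w₀ n)
  | 0, _ => measurable_const
  | n + 1, hΓ => by
    have ih : Measurable[m] (stoppedWalk Γ C A w₀ n) :=
      measurable_stoppedWalk fun k hk => hΓ k (by omega)
    exact Measurable.ite (measurableSet_lt ih measurable_const)
      ((ih.add (hΓ n n.lt_succ_self)).sub ((measurable_exp.comp ih).const_mul C)) ih

lemma abs_stoppedWalk_succ_le (hC : 0 ≤ C) (n : ℕ) (ω : Ω) :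
    |stoppedWalk Γ C A w₀ (n + 1) ω| ≤ |stoppedWalk Γ C A w₀ n ω| + |Γ (n + 1) ω| + C * exp A := by
  rcases lt_or_ge (stoppedWalk Γ C A w₀ n ω) A with h | h
  · rw [stoppedWalk_succ_of_lt h]
    have hexp : C * exp (stoppedWalk Γ C A w₀ n ω) ≤ C * exp A := by gcongr
    have := abs_sub (stoppedWalk Γ C A w₀ n ω + Γ (n + 1) ω) (C * exp (stoppedWalk Γ C A w₀ n ω))
    have := abs_add_le (stoppedWalk Γ C A w₀ n ω) (Γ (n + 1) ω)
    rw [abs_of_nonneg (by positivity : 0 ≤ C * exp (stoppedWalk Γ C A w₀ n ω))] at *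
    linarith
  · rw [stoppedWalk_succ_of_le h]
    have : 0 ≤ C * exp A := by positivity
    linarith [abs_nonneg (Γ (n + 1) ω)]

lemma integrable_stoppedWalk [IsFiniteMeasure P] (hC : 0 ≤ C)
    (hmeas : ∀ n, Measurable (Γ (n + 1))) (hint : ∀ n, Integrable (Γ (n + 1)) P) :
    ∀ n, Integrable (stoppedWalk Γ C A w₀ n) P
  | 0 => integrable_const w₀
  | n + 1 => Integrable.mono'
    (((integrable_stoppedWalk hC hmeas hint n).abs.add (hint n).abs).add (integrable_const _))
    (measurable_stoppedWalk fun k _ => hmeas k).aestronglyMeasurable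
    (ae_of_all _ fun ω => (Real.norm_eq_abs _).trans_le (abs_stoppedWalk_succ_le hC n ω))

lemma log_neg_stoppedWalk_succ_le (hA : A < 0) (hMA : 2 * M ≤ -A) (hC : 0 ≤ C)
    (hκ : ∀ a ≥ -A, 4 * C * a * exp (-a) ≤ κ) {n : ℕ} {ω : Ω} (hΓ : Γ (n + 1) ω ≤ M) :
    log (-stoppedWalk Γ C A w₀ (n + 1) ω) ≤ log (-stoppedWalk Γ C A w₀ n ω)
      + (Set.Iio A).indicator (fun x => x⁻¹) (stoppedWalk Γ C A w₀ n ω) * Γ (n + 1) ω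
      + (Set.Iio A).indicator (fun x => -(2 * x ^ 2)⁻¹) (stoppedWalk Γ C A w₀ n ω)
        * (max (Γ (n + 1) ω) 0 ^ 2 - κ) := by
  rcases lt_or_ge (stoppedWalk Γ C A w₀ n ω) A with h | h
  · have hmem : stoppedWalk Γ C A w₀ n ω ∈ Set.Iio A := h
    rw [stoppedWalk_succ_of_lt h, Set.indicator_of_mem hmem, Set.indicator_of_mem hmem]
    exact log_neg_add_sub_mul_exp_le (h.trans hA) hΓ (by linarith) hC
      (by simpa using hκ (-stoppedWalk Γ C A w₀ n ω) (by linarith))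
  · have hmem : stoppedWalk Γ C A w₀ n ω ∉ Set.Iio A := h.not_gt
    rw [stoppedWalk_succ_of_le h, Set.indicator_of_notMem hmem, Set.indicator_of_notMem hmem]
    simp

lemma norm_indicator_Iio_inv_le {A : ℝ} (hA : A ≤ -1) (x : ℝ) :
    ‖(Set.Iio A).indicator (fun x => x⁻¹) x‖ ≤ 1 := by
  by_cases h : x < A
  · rw [Set.indicator_of_mem (Set.mem_Iio.2 h), norm_inv, Real.norm_eq_abs]
    exact inv_le_one_of_one_le₀ (by rw [abs_of_neg (by linarith)]; linarith)
  · simp [Set.indicator_of_notMem (Set.notMem_Iio.2 (not_lt.1 h))]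

lemma norm_indicator_Iio_inv_sq_le {A : ℝ} (hA : A ≤ -1) (x : ℝ) :
    ‖(Set.Iio A).indicator (fun x => -(2 * x ^ 2)⁻¹) x‖ ≤ 1 := by
  by_cases h : x < A
  · rw [Set.indicator_of_mem (Set.mem_Iio.2 h), norm_neg, norm_inv, Real.norm_eq_abs]
    exact inv_le_one_of_one_le₀ (by rw [abs_of_nonneg (by positivity)]; nlinarith)
  · simp [Set.indicator_of_notMem (Set.notMem_Iio.2 (not_lt.1 h))]

lemma ae_stoppedWalk_le_neg_one (hΓM : ∀ᵐ ω ∂P, ∀ n, Γ (n + 1) ω ≤ M) (hM : 0 ≤ M)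
    (hA : M + 1 ≤ -A) (hC : 0 ≤ C) (hw₀ : w₀ < A) :
    ∀ᵐ ω ∂P, ∀ n, stoppedWalk Γ C A w₀ n ω ≤ -1 := by
  filter_upwards [hΓM] with ω hω n
  linarith [stoppedWalk_le_add hw₀ hC hM hω n]

lemma integrable_sq_posPart_of_ae_le [IsFiniteMeasure P] {X : Ω → ℝ} (hX : AEStronglyMeasurable X P)
    (hXM : ∀ᵐ ω ∂P, X ω ≤ M) : Integrable (fun ω => max (X ω) 0 ^ 2) P := by
  refine Integrable.mono' (integrable_const (max M 0 ^ 2))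
    ((continuous_id.max continuous_const).pow 2 |>.comp_aestronglyMeasurable hX) ?_
  filter_upwards [hXM] with ω hω
  rw [Real.norm_eq_abs, abs_of_nonneg (by positivity)]
  gcongr

lemma integrable_log_neg_stoppedWalk [IsFiniteMeasure P] (hC : 0 ≤ C)
    (hmeas : ∀ n, Measurable (Γ (n + 1))) (hint : ∀ n, Integrable (Γ (n + 1)) P)
    (hv : ∀ᵐ ω ∂P, ∀ n, stoppedWalk Γ C A w₀ n ω ≤ -1) (n : ℕ) :
    Integrable (fun ω => log (-stoppedWalk Γ C A w₀ n ω)) P := by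
  refine Integrable.mono' (integrable_stoppedWalk (A := A) (w₀ := w₀) hC hmeas hint n).abs
    (measurable_log.comp (measurable_stoppedWalk fun k _ => hmeas k).neg).aestronglyMeasurable ?_
  filter_upwards [hv] with ω hω
  have h1 : 1 ≤ -stoppedWalk Γ C A w₀ n ω := by linarith [hω n]
  rw [Real.norm_eq_abs, abs_of_nonneg (log_nonneg h1), abs_of_neg (by linarith)]
  exact log_le_self (by linarith)

/-- Shifted by one: `stoppedWalk (n + 1)` depends on `Γ 1, …, Γ (n + 1)`, which `ℱ n` sees. -/
theorem supermartingale_log_neg_stoppedWalk [IsProbabilityMeasure P] {ℱ : Filtration ℕ m0}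
    (hadapted : ∀ n, Measurable[ℱ n] (Γ (n + 1)))
    (hindep : ∀ n, Indep (MeasurableSpace.comap (Γ (n + 2)) inferInstance) (ℱ n) P)
    (hident : ∀ n, IdentDistrib (Γ (n + 1)) (Γ 1) P P) (hint : Integrable (Γ 1) P)
    (hmean : ∫ ω, Γ 1 ω ∂P = 0) (hΓM : ∀ᵐ ω ∂P, ∀ n, Γ (n + 1) ω ≤ M) (hM : 0 ≤ M)
    (hA : 2 * M + 1 ≤ -A) (hC : 0 ≤ C)
    (hκ : ∀ a ≥ -A, 4 * C * a * exp (-a) ≤ ∫ ω, max (Γ 1 ω) 0 ^ 2 ∂P) (hw₀ : w₀ < A) :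
    Supermartingale (fun n ω => log (-stoppedWalk Γ C A w₀ (n + 1) ω)) ℱ P := by
  have hmeas : ∀ n, Measurable (Γ (n + 1)) := fun n => (hadapted n).mono (ℱ.le n) le_rfl
  have hint' : ∀ n, Integrable (Γ (n + 1)) P := fun n => (hident n).integrable_iff.2 hint
  have hv_meas : ∀ n, Measurable[ℱ n] (stoppedWalk Γ C A w₀ (n + 1)) := fun n =>
    measurable_stoppedWalk fun k hk => (hadapted k).mono (ℱ.mono (by omega)) le_rfl
  have hY_int := integrable_log_neg_stoppedWalk hC hmeas hint'
    (ae_stoppedWalk_le_neg_one hΓM hM (by linarith) hC hw₀)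
  refine supermartingale_of_setIntegral_succ_le
    (fun n => (measurable_log.comp (hv_meas n).neg).stronglyMeasurable) (fun n => hY_int (n + 1))
    fun n s hs => ?_
  set κ := ∫ ω, max (Γ 1 ω) 0 ^ 2 ∂P
  set x := stoppedWalk Γ C A w₀ (n + 1)
  set B : Ω → ℝ := fun ω => (Set.Iio A).indicator (fun x => x⁻¹) (x ω)
  set D : Ω → ℝ := fun ω => (Set.Iio A).indicator (fun x => -(2 * x ^ 2)⁻¹) (x ω)
  set T : Ω → ℝ := fun ω => max (Γ (n + 2) ω) 0 ^ 2 - κ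
  have hB : Measurable[ℱ n] B := (measurable_inv.indicator measurableSet_Iio).comp (hv_meas n)
  have hD : Measurable[ℱ n] D :=
    (((measurable_id.pow_const 2).const_mul 2).inv.neg.indicator measurableSet_Iio).comp
      (hv_meas n)
  have hg : Measurable fun t : ℝ => max t 0 ^ 2 :=
    ((continuous_id.max continuous_const).pow 2).measurable
  have hsq_int : Integrable (fun ω => max (Γ (n + 2) ω) 0 ^ 2) P :=
    integrable_sq_posPart_of_ae_le (hmeas (n + 1)).aestronglyMeasurable
      (hΓM.mono fun ω hω => hω (n + 1))
  have hT_mean : ∫ ω, T ω ∂P = 0 := by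
    rw [integral_sub hsq_int (integrable_const κ), integral_const, probReal_univ, one_smul,
      sub_eq_zero]
    exact ((hident (n + 1)).comp hg).integral_eq
  have hA1 : A ≤ -1 := by linarith
  have hBΓ_int : Integrable (fun ω => B ω * Γ (n + 2) ω) P :=
    (hint' (n + 1)).bdd_mul (hB.mono (ℱ.le n) le_rfl).aestronglyMeasurable
      (ae_of_all _ fun _ => norm_indicator_Iio_inv_le hA1 _)
  calc ∫ ω in s, log (-stoppedWalk Γ C A w₀ (n + 1 + 1) ω) ∂P
      ≤ ∫ ω in s, (log (-x ω) + B ω * Γ (n + 2) ω) ∂P :=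
        setIntegral_le_of_ae_le_add_mul_indep (ℱ.le n) hs ((hY_int (n + 1)).add hBΓ_int)
          (hY_int (n + 2)) hD (fun _ => norm_indicator_Iio_inv_sq_le hA1 _)
          (hsq_int.sub (integrable_const κ))
          (indep_of_indep_of_le_left (hindep n)
            ((hg.comp (comap_measurable (Γ (n + 2)))).sub_const κ).comap_le) hT_mean
          (hΓM.mono fun ω hω =>
            log_neg_stoppedWalk_succ_le (by linarith) (by linarith) hC hκ (hω (n + 1)))
    _ ≤ ∫ ω in s, log (-x ω) ∂P :=
        setIntegral_le_of_ae_le_add_mul_indep (ℱ.le n) hs (hY_int (n + 1))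
          ((hY_int (n + 1)).add hBΓ_int) hB
          (fun _ => norm_indicator_Iio_inv_le hA1 _) (hint' (n + 1)) (hindep n)
          ((hident (n + 1)).integral_eq.trans hmean) (ae_of_all _ fun _ => le_rfl)

theorem ae_exists_le_stoppedWalk [IsFiniteMeasure P] {ℱ : Filtration ℕ m0} (hC : 0 < C)
    (hsuper : Supermartingale (fun n ω => log (-stoppedWalk Γ C A w₀ (n + 1) ω)) ℱ P)
    (hv : ∀ᵐ ω ∂P, ∀ n, stoppedWalk Γ C A w₀ n ω ≤ -1)
    (hfreq : ∀ᵐ ω ∂P, ∃ᶠ n in atTop, Γ (n + 1) ω < 0) :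
    ∀ᵐ ω ∂P, ∃ n, A ≤ stoppedWalk Γ C A w₀ n ω := by
  have hnonneg : ∀ n, 0 ≤ᵐ[P] fun ω => log (-stoppedWalk Γ C A w₀ (n + 1) ω) := fun n =>
    hv.mono fun ω hω => log_nonneg (by linarith [hω (n + 1)])
  filter_upwards [hsuper.ae_exists_tendsto_of_nonneg hnonneg, hv, hfreq]
    with ω ⟨c, hc⟩ hω hfreq
  by_contra! hlt
  have hconv : Tendsto (fun n => stoppedWalk Γ C A w₀ n ω) atTop (𝓝 (-exp c)) := by
    rw [← tendsto_add_atTop_iff_nat 1]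
    refine ((continuous_exp.tendsto c).comp hc).neg.congr fun n => ?_
    rw [Function.comp_apply, exp_log (by linarith [hω (n + 1)]), neg_neg]
  have hpos := eventually_pos_of_tendsto_of_eq_add_sub_mul_exp (γ := (Γ · ω)) hC
    (fun n => stoppedWalk_succ_of_lt (hlt n)) hconv
  obtain ⟨n, hneg, hpos⟩ := (hfreq.and_eventually hpos).exists
  exact hneg.not_gt hpos

end StoppedWalk

/-- The escape claim for the random walk w_{n+1} = w_n + Γ_{n+1} - C e^{w_n} with
(Γ_n) i.i.d., centered, bounded above and not a.s. zero. -/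
theorem random_walk_escape
    {Ω : Type*} [MeasurableSpace Ω] (P : Measure Ω) [IsProbabilityMeasure P]
    (Γ : ℕ → Ω → ℝ) (hmeas : ∀ n, Measurable (Γ n))
    (hindep : iIndepFun (fun n => Γ (n + 1)) P)
    (hident : ∀ n : ℕ, IdentDistrib (Γ (n + 1)) (Γ 1) P P)
    (hint : Integrable (Γ 1) P) (hmean : ∫ ω, Γ 1 ω ∂P = 0)
    (hbdd : ∃ M : ℝ, ∀ᵐ ω ∂P, Γ 1 ω ≤ M)
    (hnonzero : ¬ (∀ᵐ ω ∂P, Γ 1 ω = 0))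
    (C : ℝ) (hC : 0 < C) :
    ∃ A₀ < (0:ℝ), ∀ w₀ < A₀, ∀ w : ℕ → Ω → ℝ,
      (∀ ω, w 0 ω = w₀) →
      (∀ n : ℕ, ∀ ω, w (n + 1) ω = w n ω + Γ (n + 1) ω - C * Real.exp (w n ω)) →
      P {ω | ∃ n : ℕ, w n ω ≥ A₀} = 1 := by
  obtain ⟨M₀, hM₀⟩ := hbdd
  have hM : 0 ≤ max M₀ 0 := le_max_right _ _
  have hΓM : ∀ᵐ ω ∂P, ∀ n, Γ (n + 1) ω ≤ max M₀ 0 := ae_all_iff.2 fun n =>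
    (hident n).symm.ae_snd measurableSet_Iic (hM₀.mono fun _ h => h.trans (le_max_left _ _))
  have hκ := integral_sq_posPart_pos_of_integral_eq_zero hint
    (integrable_sq_posPart_of_ae_le hint.aestronglyMeasurable (hΓM.mono fun _ h => h 0))
    hmean hnonzero
  obtain ⟨A₀, hA₀, hMA, hκA⟩ := exists_neg_forall_mul_exp_neg_le C (2 * max M₀ 0 + 1) hκ
  refine ⟨A₀, hA₀, fun w₀ hw₀ w hw0 hwrec => ?_⟩
  have hsuper := supermartingale_log_neg_stoppedWalk
    (ℱ := Filtration.natural (fun n => Γ (n + 1)) fun n => (hmeas (n + 1)).stronglyMeasurable)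
    (fun n => (Filtration.stronglyAdapted_natural (u := fun n => Γ (n + 1)) _ n).measurable)
    (fun n => hindep.indep_comap_natural_of_lt _ n.lt_succ_self)
    hident hint hmean hΓM hM hMA hC.le hκA hw₀
  have hneg : P {ω | Γ 1 ω < 0} ≠ 0 := by
    simpa using measure_setOf_pos_ne_zero_of_integral_eq_zero hint.neg
      (by simp [integral_neg, hmean]) (by simpa using hnonzero)
  have hfreq := ae_frequently_mem_of_iIndepFun_of_identDistrib (fun n => hmeas (n + 1)) hindep
    hident measurableSet_Iio hneg
  have hescape := ae_exists_le_stoppedWalk hC hsuper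
    (ae_stoppedWalk_le_neg_one hΓM hM (by linarith) hC.le hw₀) hfreq
  rw [measure_congr (ae_eq_univ.2 (ae_iff.1 _)), measure_univ]
  filter_upwards [hescape] with ω ⟨n, hn⟩
  by_contra! hlt
  exact (stoppedWalk_eq_of_forall_lt (hw0 ω) (fun n => hwrec n ω) hlt n ▸ hn).not_gt (hlt n)
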